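/- arXiv:1809.10173 — 5 statements merged into one kernel-verified Lean document; each statement's English description precedes it below -/
import Mathlib

section
/- Let (X,X') be an exchangeable pair of ℝ^d-valued random vectors, D := X − X', and let ℓ ∈ ℝ^d with E[|ℓD·D_1|] < ∞. Let g : ℝ → ℝ be a monotone (nondecreasing or nonincreasing) measurable function with |g(x)| ≤ 1 for all x. Then |E[(ℓD)·∫_{−D_1}^0 (g(X_1) − g(X_1 + t)) dt]| ≤ E[|E[|ℓD|·D_1 | X]|]. -/
/-!
Write `a = X₁`, `b = X'₁` and `R(a, b) = ∫_b^a (g(a) - g(t)) dt`, which is the inner integral.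
For monotone `g`, `R ≥ 0` and `R(a, b) + R(b, a) = (a - b)(g(a) - g(b))`. Hence
`|E[ℓD · R]| ≤ E[|ℓD| · R]`, and since `|ℓD|` is symmetric in `(X, X')`, exchangeability turns
this into `E[|ℓD| · D₁ · g(X₁)] = E[g(X₁) · E[|ℓD| D₁ | X]] ≤ E|E[|ℓD| D₁ | X]|`.
An antitone `g` is handled through the monotone `-g`.
-/

open MeasureTheory ProbabilityTheory Matrix Filter Topology Real

noncomputable section

namespace SteinPair

/-- The standard normal cumulative distribution function. -/
def stdGaussCDF (z : ℝ) : ℝ := ((gaussianReal 0 1) (Set.Iic z)).toReal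

end SteinPair

namespace SteinPair

section RightRuleError

variable {g : ℝ → ℝ} {a b : ℝ}

/-- The error `(a - b) g(a) - ∫_b^a g` of the right-endpoint rule. -/
def rightRuleError (g : ℝ → ℝ) (a b : ℝ) : ℝ := ∫ t in b..a, (g a - g t)

theorem integral_sub_comp_add_eq_rightRuleError :
    ∫ t in (-(a - b))..0, (g a - g (a + t)) = rightRuleError g a b := by
  rw [rightRuleError, intervalIntegral.integral_comp_add_left (fun t => g a - g t) a]
  congr 1 <;> ring

theorem rightRuleError_neg :
    rightRuleError (-g) a b = -rightRuleError g a b := by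
  rw [rightRuleError, rightRuleError, ← intervalIntegral.integral_neg]
  congr 1 with t
  simp only [Pi.neg_apply]
  ring

theorem rightRuleError_nonneg (hg : Monotone g) : 0 ≤ rightRuleError g a b := by
  rcases le_total b a with hba | hab
  · exact intervalIntegral.integral_nonneg hba fun t ht => sub_nonneg.2 (hg ht.2)
  · rw [rightRuleError, intervalIntegral.integral_symm, ← intervalIntegral.integral_neg]
    exact intervalIntegral.integral_nonneg hab fun t ht => by simpa using hg ht.1

theorem rightRuleError_add_rightRuleError_swap (hg : ∀ a b, IntervalIntegrable g volume a b) :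
    rightRuleError g a b + rightRuleError g b a = (a - b) * (g a - g b) := by
  simp only [rightRuleError]
  rw [intervalIntegral.integral_sub intervalIntegrable_const (hg _ _),
    intervalIntegral.integral_sub intervalIntegrable_const (hg _ _),
    intervalIntegral.integral_const, intervalIntegral.integral_const,
    intervalIntegral.integral_symm b a, smul_eq_mul, smul_eq_mul]
  ring

theorem abs_rightRuleError_le (hgb : ∀ x, |g x| ≤ 1) :
    |rightRuleError g a b| ≤ 2 * |a - b| := by
  have hbound : ∀ t, ‖g a - g t‖ ≤ 2 := fun t => by
    rw [Real.norm_eq_abs]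
    linarith [abs_sub (g a) (g t), hgb a, hgb t]
  simpa [rightRuleError, abs_sub_comm b a] using
    intervalIntegral.norm_integral_le_of_norm_le_const (a := b) (b := a) fun t _ => hbound t

theorem rightRuleError_eq_sub_primitive (hg : ∀ a b, IntervalIntegrable g volume a b) :
    rightRuleError g a b = (a - b) * g a - ((∫ t in 0..a, g t) - ∫ t in 0..b, g t) := by
  rw [rightRuleError, intervalIntegral.integral_sub intervalIntegrable_const (hg _ _),
    intervalIntegral.integral_const,
    intervalIntegral.integral_interval_sub_left (hg _ _) (hg _ _), smul_eq_mul]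

theorem measurable_rightRuleError (hg : Monotone g) :
    Measurable fun p : ℝ × ℝ => rightRuleError g p.1 p.2 := by
  have hgi : ∀ a b, IntervalIntegrable g volume a b := fun _ _ => hg.intervalIntegrable
  have hF : Measurable fun x => ∫ t in 0..x, g t :=
    (intervalIntegral.continuous_primitive hgi 0).measurable
  simp only [rightRuleError_eq_sub_primitive hgi]
  have := hg.measurable
  fun_prop

end RightRuleError

section Exchangeable

variable {Ω α : Type*} [MeasurableSpace Ω] [MeasurableSpace α] {μ : Measure Ω}
  {X X' : Ω → α}

def IsExchangeablePair (μ : Measure Ω) (X X' : Ω → α) : Prop :=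
  μ.map (fun ω => (X ω, X' ω)) = μ.map (fun ω => (X' ω, X ω))

theorem IsExchangeablePair.integral_comp_swap (hexch : IsExchangeablePair μ X X')
    (hX : Measurable X) (hX' : Measurable X') {Φ : α × α → ℝ} (hΦ : Measurable Φ) :
    ∫ ω, Φ (X' ω, X ω) ∂μ = ∫ ω, Φ (X ω, X' ω) ∂μ := by
  rw [← integral_map (hX'.prodMk hX).aemeasurable hΦ.aestronglyMeasurable, ← hexch,
    integral_map (hX.prodMk hX').aemeasurable hΦ.aestronglyMeasurable]

theorem IsExchangeablePair.integrable_comp_swap (hexch : IsExchangeablePair μ X X')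
    (hX : Measurable X) (hX' : Measurable X') {Φ : α × α → ℝ} (hΦ : Measurable Φ)
    (hint : Integrable (fun ω => Φ (X ω, X' ω)) μ) :
    Integrable (fun ω => Φ (X' ω, X ω)) μ := by
  have hlaw : Integrable Φ (μ.map fun ω => (X ω, X' ω)) :=
    (integrable_map_measure hΦ.aestronglyMeasurable (hX.prodMk hX').aemeasurable).2 hint
  exact (hexch ▸ hlaw).comp_aemeasurable (hX'.prodMk hX).aemeasurable

theorem IsExchangeablePair.integral_eq_of_add_swap_eq (hexch : IsExchangeablePair μ X X')
    (hX : Measurable X) (hX' : Measurable X') {Φ Ψ : α × α → ℝ}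
    (hΦ : Measurable Φ) (hΨ : Measurable Ψ) (hΦi : Integrable (fun ω => Φ (X ω, X' ω)) μ)
    (hΨi : Integrable (fun ω => Ψ (X ω, X' ω)) μ)
    (hsymm : ∀ x y, Φ (x, y) + Φ (y, x) = Ψ (x, y) + Ψ (y, x)) :
    ∫ ω, Φ (X ω, X' ω) ∂μ = ∫ ω, Ψ (X ω, X' ω) ∂μ := by
  have hsum : ∀ {Θ : α × α → ℝ}, Measurable Θ → Integrable (fun ω => Θ (X ω, X' ω)) μ →
      2 * ∫ ω, Θ (X ω, X' ω) ∂μ = ∫ ω, (Θ (X ω, X' ω) + Θ (X' ω, X ω)) ∂μ := by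
    intro Θ hΘ hΘi
    rw [integral_add hΘi (hexch.integrable_comp_swap hX hX' hΘ hΘi),
      hexch.integral_comp_swap hX hX' hΘ, two_mul]
  have h2 := hsum hΦ hΦi
  simp only [hsymm, ← hsum hΨ hΨi] at h2
  linarith

end Exchangeable

theorem integral_mul_le_integral_abs_condExp {Ω : Type*} {m m₀ : MeasurableSpace Ω}
    {μ : Measure Ω} [IsFiniteMeasure μ] (hm : m ≤ m₀) {f h : Ω → ℝ}
    (hf : StronglyMeasurable[m] f) (hfb : ∀ ω, |f ω| ≤ 1) (hh : Integrable h μ) :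
    ∫ ω, f ω * h ω ∂μ ≤ ∫ ω, |μ[h|m] ω| ∂μ := by
  have hfh : Integrable (f * h) μ :=
    hh.bdd_mul (hf.mono hm).aestronglyMeasurable (ae_of_all _ hfb)
  calc ∫ ω, f ω * h ω ∂μ = ∫ ω, μ[f * h|m] ω ∂μ := (integral_condExp hm).symm
    _ = ∫ ω, f ω * μ[h|m] ω ∂μ :=
      integral_congr_ae (condExp_mul_of_stronglyMeasurable_left hf hfh hh)
    _ ≤ ∫ ω, |μ[h|m] ω| ∂μ := by
      refine integral_mono (integrable_condExp.bdd_mul ?_ (ae_of_all _ hfb))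
        integrable_condExp.abs fun ω => ?_
      · exact (hf.mono hm).aestronglyMeasurable
      · calc f ω * μ[h|m] ω ≤ |f ω| * |μ[h|m] ω| := by rw [← abs_mul]; exact le_abs_self _
          _ ≤ |μ[h|m] ω| := mul_le_of_le_one_left (abs_nonneg _) (hfb ω)

section MonotoneBound

variable {Ω α : Type*} [MeasurableSpace Ω] [mα : MeasurableSpace α] {μ : Measure Ω}
  {X X' : Ω → α} {φ : α → ℝ} {g : ℝ → ℝ}

/-- As `w` is symmetric, `w · R(a, b)` and `g(a) · w · (a - b)` have the same symmetrization
`w · (a - b) (g(a) - g(b))`. -/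
theorem IsExchangeablePair.integral_mul_rightRuleError_eq (hexch : IsExchangeablePair μ X X')
    (hX : Measurable X) (hX' : Measurable X') (hφ : Measurable φ) {w : α × α → ℝ}
    (hw : Measurable w) (hw_symm : ∀ x y, w (x, y) = w (y, x)) (hg : Monotone g)
    (hgb : ∀ x, |g x| ≤ 1) (hint : Integrable (fun ω => w (X ω, X' ω) * (φ (X ω) - φ (X' ω))) μ) :
    ∫ ω, w (X ω, X' ω) * rightRuleError g (φ (X ω)) (φ (X' ω)) ∂μ =
      ∫ ω, g (φ (X ω)) * (w (X ω, X' ω) * (φ (X ω) - φ (X' ω))) ∂μ := by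
  have hR := measurable_rightRuleError hg
  have hgm := hg.measurable
  refine hexch.integral_eq_of_add_swap_eq hX hX'
    (Φ := fun z => w z * rightRuleError g (φ z.1) (φ z.2))
    (Ψ := fun z => g (φ z.1) * (w z * (φ z.1 - φ z.2))) (by fun_prop) (by fun_prop) ?_ ?_ ?_
  · refine (hint.norm.const_mul 2).mono' (by fun_prop) (ae_of_all _ fun ω => ?_)
    simp only [Real.norm_eq_abs, abs_mul]
    rw [mul_left_comm]
    exact mul_le_mul_of_nonneg_left (abs_rightRuleError_le hgb) (abs_nonneg _)
  · exact hint.bdd_mul (hgm.comp (hφ.comp hX)).aestronglyMeasurable (ae_of_all _ fun ω => hgb _)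
  · intro x y
    have hsum := rightRuleError_add_rightRuleError_swap (a := φ x) (b := φ y)
      fun _ _ => hg.intervalIntegrable
    simp only [← hw_symm x y]
    linear_combination w (x, y) * hsum

theorem IsExchangeablePair.abs_integral_mul_rightRuleError_le [IsFiniteMeasure μ]
    (hexch : IsExchangeablePair μ X X') (hX : Measurable X) (hX' : Measurable X')
    (hφ : Measurable φ) {L : α × α → ℝ} (hL : Measurable L)
    (hL_symm : ∀ x y, |L (x, y)| = |L (y, x)|) (hg : Monotone g) (hgb : ∀ x, |g x| ≤ 1)
    (hint : Integrable (fun ω => L (X ω, X' ω) * (φ (X ω) - φ (X' ω))) μ) :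
    |∫ ω, L (X ω, X' ω) * rightRuleError g (φ (X ω)) (φ (X' ω)) ∂μ| ≤
      ∫ ω, |(μ[fun ω => |L (X ω, X' ω)| * (φ (X ω) - φ (X' ω)) | mα.comap X]) ω| ∂μ := by
  have hint_abs : Integrable (fun ω => |L (X ω, X' ω)| * (φ (X ω) - φ (X' ω))) μ :=
    hint.mono (by fun_prop) (ae_of_all _ fun ω => by simp)
  have hgφX : StronglyMeasurable[mα.comap X] fun ω => g (φ (X ω)) :=
    (hg.measurable.comp (hφ.comp (comap_measurable X))).stronglyMeasurable
  calc |∫ ω, L (X ω, X' ω) * rightRuleError g (φ (X ω)) (φ (X' ω)) ∂μ|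
      ≤ ∫ ω, |L (X ω, X' ω)| * rightRuleError g (φ (X ω)) (φ (X' ω)) ∂μ := by
        refine (abs_integral_le_integral_abs).trans_eq (integral_congr_ae (ae_of_all _ fun ω => ?_))
        dsimp only
        rw [abs_mul, abs_of_nonneg (rightRuleError_nonneg hg)]
    _ = ∫ ω, g (φ (X ω)) * (|L (X ω, X' ω)| * (φ (X ω) - φ (X' ω))) ∂μ :=
        hexch.integral_mul_rightRuleError_eq hX hX' hφ hL.abs hL_symm hg hgb hint_abs
    _ ≤ _ := integral_mul_le_integral_abs_condExp hX.comap_le hgφX (fun ω => hgb _) hint_abs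

end MonotoneBound

theorem stein_pair_monotone_bound_general
    {Ω : Type*} [MeasurableSpace Ω] (μ : Measure Ω) [IsProbabilityMeasure μ]
    {d : ℕ} (hd : 0 < d) (X X' : Ω → Fin d → ℝ) (hX : Measurable X) (hX' : Measurable X')
    (hexch : μ.map (fun ω => (X ω, X' ω)) = μ.map (fun ω => (X' ω, X ω)))
    (ℓ : Fin d → ℝ)
    (hint : Integrable (fun ω => (ℓ ⬝ᵥ (X ω - X' ω)) * (X ω ⟨0, hd⟩ - X' ω ⟨0, hd⟩)) μ)
    (g : ℝ → ℝ) (hg : Monotone g ∨ Antitone g)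
    (hgb : ∀ x, |g x| ≤ 1) :
    |∫ ω, (ℓ ⬝ᵥ (X ω - X' ω)) *
        (∫ t in (-(X ω ⟨0, hd⟩ - X' ω ⟨0, hd⟩))..0, (g (X ω ⟨0, hd⟩) - g (X ω ⟨0, hd⟩ + t))) ∂μ|
      ≤ ∫ ω, |(μ[(fun ω' => |ℓ ⬝ᵥ (X ω' - X' ω')| * (X ω' ⟨0, hd⟩ - X' ω' ⟨0, hd⟩)) |
          MeasurableSpace.comap X MeasurableSpace.pi]) ω| ∂μ := by
  have hL : Measurable fun z : (Fin d → ℝ) × (Fin d → ℝ) => ℓ ⬝ᵥ (z.1 - z.2) :=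
    (continuous_const.dotProduct (continuous_fst.sub continuous_snd)).measurable
  have hL_symm : ∀ x y : Fin d → ℝ, |ℓ ⬝ᵥ (x - y)| = |ℓ ⬝ᵥ (y - x)| := fun x y => by
    rw [← neg_sub, dotProduct_neg, abs_neg]
  have hbound : ∀ f : ℝ → ℝ, Monotone f → (∀ x, |f x| ≤ 1) →
      |∫ ω, (ℓ ⬝ᵥ (X ω - X' ω)) * rightRuleError f (X ω ⟨0, hd⟩) (X' ω ⟨0, hd⟩) ∂μ| ≤ _ :=
    fun f hf hfb => IsExchangeablePair.abs_integral_mul_rightRuleError_le hexch hX hX'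
      (measurable_pi_apply _) hL hL_symm hf hfb hint
  simp only [integral_sub_comp_add_eq_rightRuleError]
  rcases hg with hg | hg
  · exact hbound g hg hgb
  · simpa [rightRuleError_neg, integral_neg] using hbound (-g) hg.neg (by simpa using hgb)

/-- For an exchangeable pair `(X, X')` with `D = X − X'`, `ℓ ∈ ℝ^d`, and a monotone
measurable `g` bounded by `1`,
`|E[ℓD·∫_{−D_1}^0 (g(X_1) − g(X_1 + t)) dt]| ≤ E[|E[|ℓD|·D_1 | X]|]`. -/
theorem stein_pair_monotone_bound
    {Ω : Type*} [MeasurableSpace Ω] (μ : Measure Ω) [IsProbabilityMeasure μ]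
    {d : ℕ} (hd : 0 < d) (X X' : Ω → Fin d → ℝ) (hX : Measurable X) (hX' : Measurable X')
    (hexch : μ.map (fun ω => (X ω, X' ω)) = μ.map (fun ω => (X' ω, X ω)))
    (ℓ : Fin d → ℝ)
    (hint : Integrable (fun ω => (ℓ ⬝ᵥ (X ω - X' ω)) * (X ω ⟨0, hd⟩ - X' ω ⟨0, hd⟩)) μ)
    (g : ℝ → ℝ) (hg : Monotone g ∨ Antitone g) (hgm : Measurable g)
    (hgb : ∀ x, |g x| ≤ 1) :
    |∫ ω, (ℓ ⬝ᵥ (X ω - X' ω)) *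
        (∫ t in (-(X ω ⟨0, hd⟩ - X' ω ⟨0, hd⟩))..0, (g (X ω ⟨0, hd⟩) - g (X ω ⟨0, hd⟩ + t))) ∂μ|
      ≤ ∫ ω, |(μ[(fun ω' => |ℓ ⬝ᵥ (X ω' - X' ω')| * (X ω' ⟨0, hd⟩ - X' ω' ⟨0, hd⟩)) |
          MeasurableSpace.comap X MeasurableSpace.pi]) ω| ∂μ :=
  stein_pair_monotone_bound_general μ hd X X' hX hX' hexch ℓ hint g hg hgb

end SteinPair
end
end

section
/- With the ICW exchangeable pair construction, the two-dimensional regression equation E[(X_n − X'_n, X̃_n − X̃'_n)ᵗ | F_n] = λ·Λ·(X_n, X̃_n)ᵗ + λ·(R_1 + R_2, R̃_1 + R̃_2)ᵗ holds almost surely, where Λ is the 2×2 matrix with rows (1, −c) and (0, 1/σ²), and R_1 := (√n/√χ_n)·(1/n)∑_i [tanh((β w_i/E[W_n])·m̃_n + h) − tanh((β w_i/E[W_n])·m̃_n^i + h)], R_2 := (√n/√χ_n)·(1/n)∑_i [tanh(t_i*) − tanh((β w_i/E[W_n])·m̃_n + h)] + c·X̃_n, R̃_1 := (√n/√χ̃_n)·(1/n)∑_i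 w_i·[tanh((β w_i/E[W_n])·m̃_n + h) − tanh((β w_i/E[W_n])·m̃_n^i + h)], R̃_2 := (√n/√χ̃_n)·√(E[W_n]/β)·G_n'(√(β/E[W_n])·m̃_n) − (1/σ²)·X̃_n. -/
open Real BigOperators Finset MeasureTheory Filter ProbabilityTheory Topology

noncomputable section

namespace ICW

/-- The real spin value associated to a Boolean: `true ↦ 1`, `false ↦ -1`. -/
def spin (b : Bool) : ℝ := if b then 1 else -1

/-- `E[W_n^k] = (1/n) ∑_i w_i^k`. -/
def EWk (n : ℕ) (w : Fin n → ℝ) (k : ℕ) : ℝ := (1 / n : ℝ) * ∑ i, (w i) ^ k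

/-- `E[W_n] = (1/n) ∑_i w_i`. -/
def EW (n : ℕ) (w : Fin n → ℝ) : ℝ := (1 / n : ℝ) * ∑ i, w i

/-- The (negative) Hamiltonian of the inhomogeneous Curie–Weiss model. -/
def ham (n : ℕ) (w : Fin n → ℝ) (β h : ℝ) (σ : Fin n → Bool) : ℝ :=
  β / (2 * ∑ i, w i) * (∑ i, w i * spin (σ i)) ^ 2 + h * ∑ i, spin (σ i)

/-- Unnormalized Boltzmann–Gibbs weight. -/
def wt (n : ℕ) (w : Fin n → ℝ) (β h : ℝ) (σ : Fin n → Bool) : ℝ :=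
  Real.exp (ham n w β h σ)

/-- Partition function `Z_n`. -/
def Z (n : ℕ) (w : Fin n → ℝ) (β h : ℝ) : ℝ := ∑ σ : Fin n → Bool, wt n w β h σ

/-- Expectation under the ICW measure `μ_n`. -/
def icwE (n : ℕ) (w : Fin n → ℝ) (β h : ℝ) (f : (Fin n → Bool) → ℝ) : ℝ :=
  (∑ σ : Fin n → Bool, wt n w β h σ * f σ) / Z n w β h

open Classical in
/-- Probability of an event under the ICW measure `μ_n`. -/
def icwP (n : ℕ) (w : Fin n → ℝ) (β h : ℝ) (A : (Fin n → Bool) → Prop) : ℝ :=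
  icwE n w β h (fun σ => if A σ then 1 else 0)

/-- Magnetization `m_n`. -/
def mn (n : ℕ) (σ : Fin n → Bool) : ℝ := (1 / n : ℝ) * ∑ i, spin (σ i)

/-- Weighted magnetization `m̃_n`. -/
def mtil (n : ℕ) (w : Fin n → ℝ) (σ : Fin n → Bool) : ℝ :=
  (1 / n : ℝ) * ∑ i, w i * spin (σ i)

/-- Weighted magnetization leaving out spin `i`, `m̃_n^i`. -/
def mtilI (n : ℕ) (w : Fin n → ℝ) (σ : Fin n → Bool) (i : Fin n) : ℝ :=
  (1 / n : ℝ) * ∑ j ∈ Finset.univ.erase i, w j * spin (σ j)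

/-- Argument `√(β/E[W_n])·w_i·x + h`. -/
def arg (n : ℕ) (w : Fin n → ℝ) (β h x : ℝ) (i : Fin n) : ℝ :=
  Real.sqrt (β / EW n w) * w i * x + h

/-- `G_n(x)`. -/
def Gfun (n : ℕ) (w : Fin n → ℝ) (β h : ℝ) (x : ℝ) : ℝ :=
  x ^ 2 / 2 - (1 / n : ℝ) * ∑ i, Real.log (Real.cosh (arg n w β h x i))

/-- `G_n(x; s)` (with tilted argument `x+s`). -/
def GfunS (n : ℕ) (w : Fin n → ℝ) (β h : ℝ) (x s : ℝ) : ℝ :=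
  x ^ 2 / 2 - (1 / n : ℝ) * ∑ i, Real.log (Real.cosh (arg n w β h (x + s) i))

/-- `G_n'(x)`. -/
def Gfun' (n : ℕ) (w : Fin n → ℝ) (β h : ℝ) (x : ℝ) : ℝ :=
  x - (1 / n : ℝ) * ∑ i, Real.sqrt (β / EW n w) * w i * Real.tanh (arg n w β h x i)

/-- `G_n''(x)`. -/
def Gfun'' (n : ℕ) (w : Fin n → ℝ) (β h : ℝ) (x : ℝ) : ℝ :=
  1 - β / EW n w * ((1 / n : ℝ) * ∑ i, (1 - Real.tanh (arg n w β h x i) ^ 2) * (w i) ^ 2)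

/-- `x` has the same sign as `h` (and is `0` when `h = 0`). -/
def SameSign (h x : ℝ) : Prop :=
  (0 < h ∧ 0 < x) ∨ (h < 0 ∧ x < 0) ∨ (h = 0 ∧ x = 0)

/-- `M_n`, defined from a solution `x` of the fixed point equation. -/
def Mn (n : ℕ) (w : Fin n → ℝ) (β h x : ℝ) : ℝ :=
  (1 / n : ℝ) * ∑ i, Real.tanh (arg n w β h x i)

/-- The susceptibility `χ_n`, defined from a solution `x` of the fixed point equation. -/
def chiN (n : ℕ) (w : Fin n → ℝ) (β h x : ℝ) : ℝ :=
  1 - (1 / n : ℝ) * ∑ i, Real.tanh (arg n w β h x i) ^ 2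
    + β / EW n w * ((1 / n : ℝ) * ∑ i, (1 - Real.tanh (arg n w β h x i) ^ 2) * w i) ^ 2
      / Gfun'' n w β h x

/-- `M̃_n`. -/
def Mtil (n : ℕ) (w : Fin n → ℝ) (β x : ℝ) : ℝ := Real.sqrt (EW n w / β) * x

/-- `χ̃_n`. -/
def chiTil (n : ℕ) (w : Fin n → ℝ) (β h x : ℝ) : ℝ :=
  ((1 / n : ℝ) * ∑ i, (1 - Real.tanh (arg n w β h x i) ^ 2) * (w i) ^ 2) / Gfun'' n w β h x

/-- The normalized magnetization `X_n` (as a function of the configuration),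
where `x` is the relevant solution of the fixed point equation. -/
def Xn (n : ℕ) (w : Fin n → ℝ) (β h x : ℝ) (σ : Fin n → Bool) : ℝ :=
  Real.sqrt n * (mn n σ - Mn n w β h x) / Real.sqrt (chiN n w β h x)

/-- The normalized weighted magnetization `X̃_n`. -/
def Xtil (n : ℕ) (w : Fin n → ℝ) (β h x : ℝ) (σ : Fin n → Bool) : ℝ :=
  Real.sqrt n * (mtil n w σ - Mtil n w β x) / Real.sqrt (chiTil n w β h x)

/-- The standard normal cumulative distribution function. -/
def stdGaussCDF (z : ℝ) : ℝ := ((gaussianReal 0 1) (Set.Iic z)).toReal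

/-- Kolmogorov distance between the law of `X` under `μ_n` and the standard normal law. -/
def dK (n : ℕ) (w : Fin n → ℝ) (β h : ℝ) (X : (Fin n → Bool) → ℝ) : ℝ :=
  ⨆ z : ℝ, |icwP n w β h (fun σ => X σ ≤ z) - stdGaussCDF z|

/-- Weight regularity condition (i): the empirical weight distribution converges weakly to
the law `ν` of `W`, which is a probability measure with `E[W] > 0`. -/
def WeightRegI (w : (n : ℕ) → Fin n → ℝ) (ν : Measure ℝ) : Prop :=
  (∀ n i, 0 < w n i) ∧ IsProbabilityMeasure ν ∧
    (∀ f : BoundedContinuousFunction ℝ ℝ,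
      Tendsto (fun n : ℕ => (1 / n : ℝ) * ∑ i, f (w n i)) atTop (𝓝 (∫ x, f x ∂ν))) ∧
    Integrable (fun x => x) ν ∧ 0 < ∫ x, x ∂ν

/-- Weight regularity condition (ii): `E[W_n²] → E[W²] < ∞`. -/
def WeightRegII (w : (n : ℕ) → Fin n → ℝ) (ν : Measure ℝ) : Prop :=
  Integrable (fun x => x ^ 2) ν ∧
    Tendsto (fun n => EWk n (w n) 2) atTop (𝓝 (∫ x, x ^ 2 ∂ν))

/-- Weight regularity condition (iii): `E[W_n³] → E[W³] < ∞`. -/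
def WeightRegIII (w : (n : ℕ) → Fin n → ℝ) (ν : Measure ℝ) : Prop :=
  Integrable (fun x => x ^ 3) ν ∧
    Tendsto (fun n => EWk n (w n) 3) atTop (𝓝 (∫ x, x ^ 3 ∂ν))

/-- The critical inverse temperature `β_c = E[W]/E[W²]`. -/
def betaC (ν : Measure ℝ) : ℝ := (∫ x, x ∂ν) / (∫ x, x ^ 2 ∂ν)

/-- The uniqueness regime `U`. -/
def Uniq (ν : Measure ℝ) (β h : ℝ) : Prop :=
  (0 ≤ β ∧ h ≠ 0) ∨ (0 < β ∧ β < betaC ν ∧ h = 0)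

/-- Probability that spin `i` equals `+1` given the remaining spins. -/
def pPlus (n : ℕ) (w : Fin n → ℝ) (β h : ℝ) (σ : Fin n → Bool) (i : Fin n) : ℝ :=
  wt n w β h (Function.update σ i true) /
    (wt n w β h (Function.update σ i true) + wt n w β h (Function.update σ i false))

/-- Conditional expectation given `F_n` (the σ-algebra generated by `σ`) of a function of
`(σ, I, σ'_I)`, where `I` is uniform on `[n]` and `σ'_I` is resampled from the conditional
distribution of the `I`-th spin given the others. -/
def condAvg (n : ℕ) (w : Fin n → ℝ) (β h : ℝ)
    (f : (Fin n → Bool) → Fin n → Bool → ℝ) (σ : Fin n → Bool) : ℝ :=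
  (1 / n : ℝ) * ∑ i, (pPlus n w β h σ i * f σ i true + (1 - pPlus n w β h σ i) * f σ i false)

/-- The increment `X_n − X'_n` as a function of `(σ, I, σ'_I)`. -/
def XnD (n : ℕ) (w : Fin n → ℝ) (β h x : ℝ) (σ : Fin n → Bool) (i : Fin n) (b : Bool) : ℝ :=
  (spin (σ i) - spin b) / (Real.sqrt n * Real.sqrt (chiN n w β h x))

/-- The increment `X̃_n − X̃'_n` as a function of `(σ, I, σ'_I)`. -/
def XtilD (n : ℕ) (w : Fin n → ℝ) (β h x : ℝ) (σ : Fin n → Bool) (i : Fin n) (b : Bool) : ℝ :=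
  w i * (spin (σ i) - spin b) / (Real.sqrt n * Real.sqrt (chiTil n w β h x))

/-- The constant `c` in the regression equation. -/
def cconst (n : ℕ) (w : Fin n → ℝ) (β h x : ℝ) : ℝ :=
  Real.sqrt (chiTil n w β h x) / Real.sqrt (chiN n w β h x) * (β / EW n w) *
    ((1 / n : ℝ) * ∑ i, (1 - Real.tanh (arg n w β h x i) ^ 2) * w i)

end ICW

namespace ICW

/-- Error term `R_1`. -/
def R1 (n : ℕ) (w : Fin n → ℝ) (β h x : ℝ) (σ : Fin n → Bool) : ℝ :=
  Real.sqrt n / Real.sqrt (chiN n w β h x) *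
    ((1 / n : ℝ) * ∑ i, (Real.tanh (β * w i / EW n w * mtil n w σ + h)
      - Real.tanh (β * w i / EW n w * mtilI n w σ i + h)))

/-- Error term `R_2`. -/
def R2 (n : ℕ) (w : Fin n → ℝ) (β h x : ℝ) (σ : Fin n → Bool) : ℝ :=
  Real.sqrt n / Real.sqrt (chiN n w β h x) *
    ((1 / n : ℝ) * ∑ i, (Real.tanh (arg n w β h x i)
      - Real.tanh (β * w i / EW n w * mtil n w σ + h)))
  + cconst n w β h x * Xtil n w β h x σ

/-- Error term `R̃_1`. -/
def Rtil1 (n : ℕ) (w : Fin n → ℝ) (β h x : ℝ) (σ : Fin n → Bool) : ℝ :=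
  Real.sqrt n / Real.sqrt (chiTil n w β h x) *
    ((1 / n : ℝ) * ∑ i, w i * (Real.tanh (β * w i / EW n w * mtil n w σ + h)
      - Real.tanh (β * w i / EW n w * mtilI n w σ i + h)))

/-- Error term `R̃_2` (with `1/σ² = G_n''(x_n*)`). -/
def Rtil2 (n : ℕ) (w : Fin n → ℝ) (β h x : ℝ) (σ : Fin n → Bool) : ℝ :=
  Real.sqrt n / Real.sqrt (chiTil n w β h x) * Real.sqrt (EW n w / β) *
    Gfun' n w β h (Real.sqrt (β / EW n w) * mtil n w σ)
  - Gfun'' n w β h x * Xtil n w β h x σ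

/-! Flipping spin `i` changes the Hamiltonian by twice the local field
`β w_i m̃_n^i / E[W_n] + h`, so the resampled spin `σ'_I` has conditional mean `tanh` of that
field and each component of `E[X − X' | F_n]` is `1/n` times a weighted sum
`∑ c_i (σ_i − tanh(local field_i))`. The error terms are what remains after writing this sum as
`Λ (X_n, X̃_n)ᵗ`: in the first component `R_1 + R_2 − c X̃_n` telescopes, and in the second
`√(E[W_n]/β) G_n'(√(β/E[W_n]) m̃_n) = m̃_n − (1/n) ∑_i w_i tanh(β w_i m̃_n / E[W_n] + h)`,
which needs `β / E[W_n] > 0`. -/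

lemma two_mul_exp_div_exp_add_exp_sub_one (a b : ℝ) :
    2 * (exp a / (exp a + exp b)) - 1 = tanh ((a - b) / 2) := by
  have ea : exp a = exp ((a - b) / 2) * exp ((a + b) / 2) := by rw [← exp_add]; ring_nf
  have eb : exp b = exp (-((a - b) / 2)) * exp ((a + b) / 2) := by rw [← exp_add]; ring_nf
  rw [tanh_eq_sinh_div_cosh, sinh_eq, cosh_eq, ea, eb]
  field_simp
  ring

@[simp] lemma spin_true : spin true = 1 := rfl

@[simp] lemma spin_false : spin false = -1 := rfl

lemma sum_apply_update {ι α M : Type*} [Fintype ι] [DecidableEq ι] [AddCommMonoid M]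
    (f : ι → α → M) (σ : ι → α) (i : ι) (b : α) :
    ∑ j, f j (Function.update σ i b j) = ∑ j ∈ univ.erase i, f j (σ j) + f i b := by
  rw [← add_sum_erase _ _ (mem_univ i), Function.update_self, add_comm]
  congr 1
  refine sum_congr rfl fun j hj => ?_
  rw [Function.update_of_ne (ne_of_mem_erase hj)]

lemma ham_update_true_sub_false {n : ℕ} (w : Fin n → ℝ) (β h : ℝ) (σ : Fin n → Bool)
    (i : Fin n) :
    ham n w β h (Function.update σ i true) - ham n w β h (Function.update σ i false)
      = 2 * (β * w i / EW n w * mtilI n w σ i + h) := by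
  have hn : (n : ℝ)⁻¹ ≠ 0 := inv_ne_zero (Nat.cast_ne_zero.mpr (Fin.pos i).ne')
  have hfield : β * w i / EW n w * mtilI n w σ i
      = β * w i * (∑ j ∈ univ.erase i, w j * spin (σ j)) / ∑ j, w j := by
    rw [EW, mtilI, one_div, div_mul_eq_mul_div, mul_left_comm, mul_div_mul_left _ _ hn]
  have hweighted := sum_apply_update (fun j s => w j * spin s) σ i
  have hplain := sum_apply_update (fun _ s => spin s) σ i
  simp only [ham, hweighted, hplain, hfield, spin_true, spin_false]
  ring

lemma two_mul_pPlus_sub_one {n : ℕ} (w : Fin n → ℝ) (β h : ℝ) (σ : Fin n → Bool) (i : Fin n) :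
    2 * pPlus n w β h σ i - 1 = tanh (β * w i / EW n w * mtilI n w σ i + h) := by
  rw [pPlus, wt, wt, two_mul_exp_div_exp_add_exp_sub_one, ham_update_true_sub_false,
    mul_div_cancel_left₀ _ two_ne_zero]

lemma condAvg_mul_spin_sub {n : ℕ} (w : Fin n → ℝ) (β h : ℝ) (c : Fin n → ℝ)
    (σ : Fin n → Bool) :
    condAvg n w β h (fun σ i b => c i * (spin (σ i) - spin b)) σ
      = 1 / n * ∑ i, c i * (spin (σ i) - tanh (β * w i / EW n w * mtilI n w σ i + h)) := by
  rw [condAvg]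
  congr 1
  refine sum_congr rfl fun i _ => ?_
  rw [← two_mul_pPlus_sub_one, spin_true, spin_false]
  ring

lemma sqrt_mul_Gfun'_sqrt_mul {n : ℕ} {w : Fin n → ℝ} {β : ℝ} (hβ : 0 < β / EW n w) (h m : ℝ) :
    √(EW n w / β) * Gfun' n w β h (√(β / EW n w) * m)
      = m - 1 / n * ∑ i, w i * tanh (β * w i / EW n w * m + h) := by
  have hsq : √(β / EW n w) * √(β / EW n w) = β / EW n w := mul_self_sqrt hβ.le
  have hinv : √(EW n w / β) * √(β / EW n w) = 1 := by
    rw [← inv_div, sqrt_inv, inv_mul_cancel₀ (sqrt_pos.2 hβ).ne']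
  have harg : ∀ i, √(β / EW n w) * w i * (√(β / EW n w) * m) + h = β * w i / EW n w * m + h := by
    intro i
    linear_combination (w i * m) * hsq
  simp only [Gfun', arg, harg]
  simp only [mul_assoc, ← mul_sum]
  linear_combination (m - 1 / n * ∑ i, w i * tanh (β * w i / EW n w * m + h)) * hinv

lemma sqrt_div_mul_one_div_self (t a : ℝ) : √t / a * (1 / t) = (√t * a)⁻¹ := by
  calc √t / a * (1 / t) = √t / t / a := by ring
    _ = _ := by rw [sqrt_div_self']; ring

lemma condAvg_XnD {n : ℕ} (w : Fin n → ℝ) (β h x : ℝ) (σ : Fin n → Bool) :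
    condAvg n w β h (XnD n w β h x) σ
      = 1 / n * (Xn n w β h x σ - cconst n w β h x * Xtil n w β h x σ
          + (R1 n w β h x σ + R2 n w β h x σ)) := by
  have hXnD : XnD n w β h x
      = fun σ i b => (√n * √(chiN n w β h x))⁻¹ * (spin (σ i) - spin b) := by
    funext σ i b
    exact div_eq_inv_mul _ _
  rw [hXnD, condAvg_mul_spin_sub, ← mul_sum, ← sqrt_div_mul_one_div_self]
  simp only [Xn, R1, R2, Mn, mn, sum_sub_distrib]
  ring

lemma condAvg_XtilD {n : ℕ} {w : Fin n → ℝ} {β : ℝ} (hβ : 0 < β / EW n w) (h x : ℝ)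
    (σ : Fin n → Bool) :
    condAvg n w β h (XtilD n w β h x) σ
      = 1 / n * (Gfun'' n w β h x * Xtil n w β h x σ
          + (Rtil1 n w β h x σ + Rtil2 n w β h x σ)) := by
  have hXtilD : XtilD n w β h x
      = fun σ i b => w i / (√n * √(chiTil n w β h x)) * (spin (σ i) - spin b) := by
    funext σ i b
    exact mul_div_right_comm _ _ _
  have hsum : ∀ a l : Fin n → ℝ, ∑ i, w i / (√n * √(chiTil n w β h x)) * (a i - l i)
      = (√n * √(chiTil n w β h x))⁻¹ * (∑ i, w i * a i - ∑ i, w i * l i) := by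
    intro a l
    rw [← sum_sub_distrib, mul_sum]
    exact sum_congr rfl fun i _ => by ring
  rw [hXtilD, condAvg_mul_spin_sub, hsum, ← sqrt_div_mul_one_div_self]
  simp only [Rtil1, Rtil2, mul_sub, sum_sub_distrib]
  have hmtil : mtil n w σ = 1 / n * ∑ i, w i * spin (σ i) := rfl
  linear_combination (-(1 / n * (√n / √(chiTil n w β h x)))) *
    (sqrt_mul_Gfun'_sqrt_mul hβ h (mtil n w σ) + hmtil)

lemma EW_pos {n : ℕ} (hn : 0 < n) {w : Fin n → ℝ} (hw : ∀ i, 0 < w i) : 0 < EW n w := by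
  have : 0 < ∑ i, w i := sum_pos (fun i _ => hw i) (univ_nonempty_iff.mpr ⟨⟨0, hn⟩⟩)
  unfold EW
  positivity

lemma vec_two_eq_smul_mulVec_add_smul {R : Type*} [CommRing R] {a b l p q r s u v e f : R}
    (ha : a = l * (p * u + q * v + e)) (hb : b = l * (r * u + s * v + f)) :
    ![a, b] = l • (Matrix.of !![p, q; r, s]).mulVec ![u, v] + l • ![e, f] := by
  change ![a, b] = l • !![p, q; r, s].mulVec ![u, v] + l • ![e, f]
  ext j
  fin_cases j <;> simp [ha, hb] <;> ring

theorem regression_equation_general (n : ℕ) (hn : 0 < n) (w : Fin n → ℝ) (hw : ∀ i, 0 < w i)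
    (β h : ℝ) (hβ : 0 < β) (x : ℝ) (σ : Fin n → Bool) :
    ![condAvg n w β h (XnD n w β h x) σ, condAvg n w β h (XtilD n w β h x) σ]
      = (1 / n : ℝ) •
          (Matrix.of !![(1 : ℝ), -cconst n w β h x; 0, Gfun'' n w β h x]).mulVec
            ![Xn n w β h x σ, Xtil n w β h x σ]
        + (1 / n : ℝ) • ![R1 n w β h x σ + R2 n w β h x σ,
            Rtil1 n w β h x σ + Rtil2 n w β h x σ] := by
  have hβEW : 0 < β / EW n w := div_pos hβ (EW_pos hn hw)
  apply vec_two_eq_smul_mulVec_add_smul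
  · rw [condAvg_XnD]
    ring
  · rw [condAvg_XtilD hβEW]
    ring

/-- **The two-dimensional regression equation** for the ICW exchangeable pair:
`E[(X_n − X'_n, X̃_n − X̃'_n)ᵗ | F_n] = λ Λ (X_n, X̃_n)ᵗ + λ (R_1 + R_2, R̃_1 + R̃_2)ᵗ`
with `λ = 1/n` and `Λ = [[1, −c], [0, 1/σ²]]`, where `σ² = 1/G_n''(x_n*)`. Here the
conditional expectation given `F_n` is the average over the uniformly chosen coordinate `I`
and the resampled spin `σ'_I`. -/
theorem regression_equation (n : ℕ) (hn : 0 < n) (w : Fin n → ℝ) (hw : ∀ i, 0 < w i)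
    (β h : ℝ) (hβ : 0 < β) (x : ℝ) (hx : Gfun' n w β h x = 0) (hsign : SameSign h x)
    (hG'' : 0 < Gfun'' n w β h x) (σ : Fin n → Bool) :
    ![condAvg n w β h (XnD n w β h x) σ, condAvg n w β h (XtilD n w β h x) σ]
      = (1 / n : ℝ) •
          (Matrix.of !![(1 : ℝ), -cconst n w β h x; 0, Gfun'' n w β h x]).mulVec
            ![Xn n w β h x σ, Xtil n w β h x σ]
        + (1 / n : ℝ) • ![R1 n w β h x σ + R2 n w β h x σ,
            Rtil1 n w β h x σ + Rtil2 n w β h x σ] :=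
  regression_equation_general n hn w hw β h hβ x σ

end ICW
end
end

section
/- Let c_n(s) := (1/n)·log E_{μ_n}[exp(s·√(β/E[W_n])·∑_{i=1}^n w_i σ_i)]. Then for every a ∈ ℝ and every s ∈ ℝ, c_n(s) = (1/n)·log( ∫_ℝ exp(−n·G_n(x/√n + a; s)) dx / ∫_ℝ exp(−n·G_n(x/√n + a; 0)) dx ), both integrals being finite. -/
open Real BigOperators Finset MeasureTheory Filter ProbabilityTheory Topology

noncomputable section

namespace ICW

/-- The cumulant generating function `c_n(s)` of the weighted spin sum. -/
def cgf (n : ℕ) (w : Fin n → ℝ) (β h : ℝ) (s : ℝ) : ℝ :=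
  (1 / n : ℝ) * Real.log (icwE n w β h
    (fun σ => Real.exp (s * Real.sqrt (β / EW n w) * ∑ i, w i * spin (σ i))))

/-- Gaussian integral with a linear term: integrability and value. -/
lemma gauss_aux (b c : ℝ) :
    Integrable (fun x : ℝ => Real.exp (-x^2/2 + b*x + c)) ∧
    (∫ x : ℝ, Real.exp (-x^2/2 + b*x + c))
      = Real.exp (b^2/2 + c) * ∫ x : ℝ, Real.exp (-x^2/2) := by
  have I0 : Integrable (fun x : ℝ => Real.exp (-x^2/2)) := by
    have := integrable_exp_neg_mul_sq (show (0:ℝ) < 1/2 by norm_num)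
    convert this using 2 with x
    ring
  have key : ∀ x : ℝ, Real.exp (-x^2/2 + b*x + c)
      = Real.exp (b^2/2 + c) * Real.exp (-(x-b)^2/2) := by
    intro x; rw [← Real.exp_add]; ring_nf
  constructor
  · have : Integrable (fun x : ℝ => Real.exp (b^2/2+c) * Real.exp (-(x-b)^2/2)) :=
      (I0.comp_sub_right b).const_mul _
    exact this.congr (by filter_upwards with x using (key x).symm)
  · simp_rw [key]
    rw [MeasureTheory.integral_const_mul,
      integral_sub_right_eq_self (fun u : ℝ => Real.exp (-u^2/2)) b]

/-- The base Gaussian integral is positive. -/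
lemma gauss_pos : (0:ℝ) < ∫ x : ℝ, Real.exp (-x^2/2) := by
  have h1 : (∫ x : ℝ, Real.exp (-(1/2:ℝ) * x^2)) = Real.sqrt (π / (1/2)) :=
    integral_gaussian (1/2)
  have heq : (fun x : ℝ => Real.exp (-x^2/2)) = fun x : ℝ => Real.exp (-(1/2:ℝ)*x^2) := by
    funext x; ring_nf
  rw [heq, h1]
  have : (0:ℝ) < π / (1/2) := by positivity
  exact Real.sqrt_pos.mpr this

/-- **Hubbard–Stratonovich representation of the cumulant generating function**: for every
`a ∈ ℝ` and `s ∈ ℝ`,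
`c_n(s) = (1/n)·log(∫ e^{−n G_n(x/√n + a; s)} dx / ∫ e^{−n G_n(x/√n + a; 0)} dx)`,
both integrals being finite. -/
theorem cgf_integral_rep (n : ℕ) (hn : 0 < n) (w : Fin n → ℝ) (hw : ∀ i, 0 < w i)
    (β h : ℝ) (hβ : 0 ≤ β) (a s : ℝ) :
    Integrable (fun x : ℝ => Real.exp (-(n : ℝ) * GfunS n w β h (x / Real.sqrt n + a) s)) ∧
    Integrable (fun x : ℝ => Real.exp (-(n : ℝ) * GfunS n w β h (x / Real.sqrt n + a) 0)) ∧
    cgf n w β h s = (1 / n : ℝ) * Real.log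
      ((∫ x : ℝ, Real.exp (-(n : ℝ) * GfunS n w β h (x / Real.sqrt n + a) s)) /
        (∫ x : ℝ, Real.exp (-(n : ℝ) * GfunS n w β h (x / Real.sqrt n + a) 0))) := by
  have hn0 : (n : ℝ) ≠ 0 := Nat.cast_ne_zero.mpr hn.ne'
  have hnpos : (0:ℝ) < n := Nat.cast_pos.mpr hn
  have hsn : Real.sqrt n ≠ 0 := by positivity
  have hsn2 : (Real.sqrt n)^2 = (n:ℝ) := Real.sq_sqrt hnpos.le
  have hEW : 0 < EW n w := by
    rw [EW]
    apply mul_pos (by positivity)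
    exact Finset.sum_pos (fun i _ => hw i) ⟨⟨0, hn⟩, Finset.mem_univ _⟩
  set κ := Real.sqrt (β / EW n w) with hκdef
  have hκ2 : κ^2 = β / EW n w := Real.sq_sqrt (div_nonneg hβ hEW.le)
  set T : (Fin n → Bool) → ℝ := fun σ => ∑ i, κ * w i * spin (σ i) with hTdef
  set M : (Fin n → Bool) → ℝ := fun σ => ∑ i, spin (σ i) with hMdef
  have hTS : ∀ σ, T σ = κ * ∑ i, w i * spin (σ i) := by
    intro σ; rw [hTdef]; simp [Finset.mul_sum, mul_assoc]
  -- pointwise Hubbard–Stratonovich identity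
  have point : ∀ (s' u : ℝ),
      Real.exp (-(n : ℝ) * GfunS n w β h (u / Real.sqrt n) s')
        = (1/2^n : ℝ) * ∑ σ : Fin n → Bool,
            Real.exp (-u^2/2 + (T σ / Real.sqrt n) * u + (s' * T σ + h * M σ)) := by
    intro s' u
    have e1 : -(n : ℝ) * GfunS n w β h (u / Real.sqrt n) s'
        = -u^2/2 + ∑ i, Real.log (Real.cosh (arg n w β h (u / Real.sqrt n + s') i)) := by
      rw [GfunS]
      have h2 : ((u / Real.sqrt n)^2 : ℝ) = u^2 / n := by rw [div_pow, hsn2]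
      rw [h2]
      field_simp
      ring
    rw [e1, Real.exp_add, Real.exp_sum]
    have e2 : ∀ i : Fin n, Real.exp (Real.log (Real.cosh (arg n w β h (u / Real.sqrt n + s') i)))
        = (1/2 : ℝ) * ∑ b : Bool, Real.exp (spin b * arg n w β h (u / Real.sqrt n + s') i) := by
      intro i
      rw [Real.exp_log (Real.cosh_pos _), Real.cosh_eq, Fintype.sum_bool]
      simp [spin]
      ring
    rw [Finset.prod_congr rfl (fun i _ => e2 i), Finset.prod_mul_distrib, Finset.prod_const,
      Finset.card_univ, Fintype.card_fin, Fintype.prod_sum]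
    have e3 : ∀ σ : Fin n → Bool,
        (∏ i, Real.exp (spin (σ i) * arg n w β h (u / Real.sqrt n + s') i))
          = Real.exp ((T σ / Real.sqrt n) * u + (s' * T σ + h * M σ)) := by
      intro σ
      rw [← Real.exp_sum]
      congr 1
      have e4 : ∀ i : Fin n, spin (σ i) * arg n w β h (u / Real.sqrt n + s') i
          = (u / Real.sqrt n + s') * (κ * w i * spin (σ i)) + h * spin (σ i) := by
        intro i; rw [arg]; ring
      rw [Finset.sum_congr rfl (fun i _ => e4 i), Finset.sum_add_distrib,
        ← Finset.mul_sum, ← Finset.mul_sum, hTdef, hMdef]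
      have : (u / Real.sqrt n) * T σ = (T σ / Real.sqrt n) * u := by ring
      ring
    rw [Finset.sum_congr rfl (fun σ _ => e3 σ)]
    have final : ∀ σ : Fin n → Bool,
        Real.exp (-u^2/2 + (T σ / Real.sqrt n) * u + (s' * T σ + h * M σ))
          = Real.exp (-u^2/2) * Real.exp ((T σ / Real.sqrt n) * u + (s' * T σ + h * M σ)) := by
      intro σ; rw [← Real.exp_add]; ring_nf
    rw [Finset.sum_congr rfl (fun σ _ => final σ), ← Finset.mul_sum,
      show ((1:ℝ)/2)^n = 1/2^n by rw [div_pow, one_pow]]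
    ring
  -- translation
  have hdiv : ∀ x : ℝ, (x + a * Real.sqrt n) / Real.sqrt n = x / Real.sqrt n + a := by
    intro x; field_simp
  have point' : ∀ (s' x : ℝ),
      Real.exp (-(n : ℝ) * GfunS n w β h (x / Real.sqrt n + a) s')
        = (1/2^n : ℝ) * ∑ σ : Fin n → Bool,
            Real.exp (-(x + a * Real.sqrt n)^2/2
              + (T σ / Real.sqrt n) * (x + a * Real.sqrt n) + (s' * T σ + h * M σ)) := by
    intro s' x
    rw [← hdiv x]
    exact point s' (x + a * Real.sqrt n)
  -- integrability
  have integ : ∀ s' : ℝ, Integrable (fun x : ℝ =>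
      Real.exp (-(n : ℝ) * GfunS n w β h (x / Real.sqrt n + a) s')) := by
    intro s'
    have I1 : Integrable (fun x : ℝ => (1/2^n : ℝ) * ∑ σ : Fin n → Bool,
        Real.exp (-(x + a * Real.sqrt n)^2/2
          + (T σ / Real.sqrt n) * (x + a * Real.sqrt n) + (s' * T σ + h * M σ))) := by
      apply Integrable.const_mul
      apply integrable_finset_sum
      intro σ _
      exact ((gauss_aux (T σ / Real.sqrt n) (s' * T σ + h * M σ)).1).comp_add_right
        (a * Real.sqrt n)
    exact I1.congr (by filter_upwards with x using (point' s' x).symm)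
  -- value of the integral
  have intval : ∀ s' : ℝ,
      (∫ x : ℝ, Real.exp (-(n : ℝ) * GfunS n w β h (x / Real.sqrt n + a) s'))
        = ((∫ x : ℝ, Real.exp (-x^2/2)) / 2^n) *
            ∑ σ : Fin n → Bool,
              wt n w β h σ * Real.exp (s' * κ * ∑ i, w i * spin (σ i)) := by
    intro s'
    simp_rw [point' s']
    rw [MeasureTheory.integral_const_mul,
      integral_finset_sum _ (fun σ _ => ((gauss_aux _ _).1).comp_add_right _)]
    have each : ∀ σ : Fin n → Bool,
        (∫ x : ℝ, Real.exp (-(x + a * Real.sqrt n)^2/2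
            + (T σ / Real.sqrt n) * (x + a * Real.sqrt n) + (s' * T σ + h * M σ)))
          = wt n w β h σ * Real.exp (s' * κ * ∑ i, w i * spin (σ i))
              * ∫ x : ℝ, Real.exp (-x^2/2) := by
      intro σ
      rw [integral_add_right_eq_self (fun u : ℝ => Real.exp (-u^2/2
        + (T σ / Real.sqrt n) * u + (s' * T σ + h * M σ))) (a * Real.sqrt n)]
      rw [(gauss_aux _ _).2]
      congr 1
      rw [wt, ← Real.exp_add]
      congr 1
      rw [ham, hTS σ]
      simp only [hMdef]
      have hl : (∑ i, w i) = n * EW n w := by rw [EW]; field_simp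
      rw [hl, div_pow, mul_pow, hsn2, hκ2]
      field_simp
      ring
    rw [Finset.sum_congr rfl (fun σ _ => each σ), ← Finset.sum_mul]
    ring
  refine ⟨integ s, integ 0, ?_⟩
  rw [intval s, intval 0]
  have hZ : (∑ σ : Fin n → Bool, wt n w β h σ * Real.exp (0 * κ * ∑ i, w i * spin (σ i)))
      = Z n w β h := by
    simp [Z]
  rw [hZ]
  rw [mul_div_mul_left _ _ ((div_pos gauss_pos (by positivity)).ne')]
  rw [cgf, icwE, hκdef]

end ICW
end
end

section
/- Suppose the weight arrays satisfy parts (i)–(ii) of the weight regularity condition and (β,h) ∈ U. Then for all n sufficiently large, the global minimizer x_n* of G_n (which is the solution of G_n'(x) = 0 with the same sign as h, and equals 0 if h = 0) satisfies G_n''(x_n*) > 0. -/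
open Real BigOperators Finset MeasureTheory Filter ProbabilityTheory Topology

noncomputable section

namespace ICW


private lemma tanh_hasDerivAt (x : ℝ) : HasDerivAt Real.tanh (1 - Real.tanh x ^ 2) x := by
  have hc := Real.cosh_pos x
  have hd := (Real.hasDerivAt_sinh x).div (Real.hasDerivAt_cosh x) hc.ne'
  have heq : (Real.cosh x * Real.cosh x - Real.sinh x * Real.sinh x) / Real.cosh x ^ 2
      = 1 - Real.tanh x ^ 2 := by
    have key := Real.cosh_sq_sub_sinh_sq x
    rw [Real.tanh_eq_sinh_div_cosh, div_pow]
    field_simp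
  rw [heq] at hd
  exact hd.congr_of_eventuallyEq (Filter.Eventually.of_forall fun y => Real.tanh_eq_sinh_div_cosh y)

private lemma tanh_sq_lt_one' (x : ℝ) : Real.tanh x ^ 2 < 1 := by
  have hc := Real.cosh_pos x
  rw [Real.tanh_eq_sinh_div_cosh, div_pow, div_lt_one (by positivity)]
  nlinarith [Real.cosh_sq_sub_sinh_sq x]

private lemma tanh_strictMono' : StrictMono Real.tanh :=
  strictMono_of_deriv_pos fun x => by
    rw [(tanh_hasDerivAt x).deriv]; nlinarith [tanh_sq_lt_one' x]

private lemma tanh_pos' {x : ℝ} (hx : 0 < x) : 0 < Real.tanh x := by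
  have := tanh_strictMono' hx; rwa [Real.tanh_zero] at this

private lemma continuous_tanh' : Continuous Real.tanh :=
  (Real.continuous_sinh.div Real.continuous_cosh fun y => (Real.cosh_pos y).ne').congr
    fun y => (Real.tanh_eq_sinh_div_cosh y).symm

private lemma tanh_slope_pos {u v : ℝ} (hu : 0 < u) (huv : u ≤ v) :
    (v - u) * (1 - Real.tanh v ^ 2) ≤ Real.tanh v - Real.tanh u := by
  rcases eq_or_lt_of_le huv with rfl | hlt
  · simp
  obtain ⟨c, hc, hceq⟩ := exists_hasDerivAt_eq_slope Real.tanh (fun y => 1 - Real.tanh y ^ 2)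
    hlt continuous_tanh'.continuousOn (fun y _ => tanh_hasDerivAt y)
  have hvu : (0:ℝ) < v - u := sub_pos.2 hlt
  have h1 : 1 - Real.tanh c ^ 2 = (Real.tanh v - Real.tanh u) / (v - u) := hceq
  have h2 : Real.tanh v - Real.tanh u = (1 - Real.tanh c ^ 2) * (v - u) := by
    rw [h1, div_mul_cancel₀ _ hvu.ne']
  have hcpos : 0 < Real.tanh c := tanh_pos' (hu.trans hc.1)
  have hcle : Real.tanh c ≤ Real.tanh v := (tanh_strictMono' hc.2).le
  have hsq : Real.tanh c ^ 2 ≤ Real.tanh v ^ 2 := by nlinarith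
  nlinarith [mul_le_mul_of_nonneg_left
    (by linarith : 1 - Real.tanh v ^ 2 ≤ 1 - Real.tanh c ^ 2) hvu.le]

private lemma tanh_slope_neg {u v : ℝ} (hu : u < 0) (hvu : v ≤ u) :
    Real.tanh v - Real.tanh u ≤ (v - u) * (1 - Real.tanh v ^ 2) := by
  have h := tanh_slope_pos (u := -u) (v := -v) (by linarith) (by linarith)
  rw [Real.tanh_neg, Real.tanh_neg] at h
  nlinarith

private lemma arg_neg (n : ℕ) (w : Fin n → ℝ) (β h x : ℝ) (i : Fin n) :
    arg n w β (-h) (-x) i = -arg n w β h x i := by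
  unfold arg; ring

private lemma Gfun'_neg (n : ℕ) (w : Fin n → ℝ) (β h x : ℝ) :
    Gfun' n w β (-h) (-x) = - Gfun' n w β h x := by
  unfold Gfun'
  simp only [arg_neg, Real.tanh_neg, mul_neg, Finset.sum_neg_distrib]
  ring

private lemma Gfun''_neg (n : ℕ) (w : Fin n → ℝ) (β h x : ℝ) :
    Gfun'' n w β (-h) (-x) = Gfun'' n w β h x := by
  unfold Gfun''
  simp only [arg_neg, Real.tanh_neg, neg_sq]

private lemma second_deriv_pos_of_fix (n : ℕ) (hn : 1 ≤ n) (w : Fin n → ℝ)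
    (hw : ∀ i, 0 < w i) {β h x : ℝ} (hβ : 0 < β) (hfix : Gfun' n w β h x = 0)
    (hh : 0 < h) (hx : 0 < x) : 0 < Gfun'' n w β h x := by
  have hn' : (0:ℝ) < n := by exact_mod_cast hn
  have hB : 0 < ∑ i, w i := Finset.sum_pos (fun i _ => hw i) ⟨⟨0, by omega⟩, Finset.mem_univ _⟩
  have hE : 0 < EW n w := by unfold EW; positivity
  set s := Real.sqrt (β / EW n w) with hs
  have hs2 : s * s = β / EW n w := Real.mul_self_sqrt (by positivity)
  have hspos : 0 < s := Real.sqrt_pos.2 (by positivity)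
  set A := ∑ i, s * w i * Real.tanh (arg n w β h x i) with hA
  set T := ∑ i, (1 - Real.tanh (arg n w β h x i) ^ 2) * (w i) ^ 2 with hT
  have hfix2 : x = (1/n:ℝ) * A := by
    have h0 := hfix
    unfold Gfun' at h0
    rw [← hs, ← hA] at h0
    linarith
  have hfixA : A = (n:ℝ) * x := by rw [hfix2]; field_simp
  have key : ∀ i : Fin n, β / EW n w * x * ((1 - Real.tanh (arg n w β h x i) ^ 2) * w i ^ 2)
      ≤ s * w i * Real.tanh (arg n w β h x i) - s * w i * Real.tanh h := by
    intro i
    have hwi := hw i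
    have harg : arg n w β h x i = s * w i * x + h := by rw [arg, ← hs]
    have hvge : h ≤ s * w i * x + h := by nlinarith [mul_pos (mul_pos hspos hwi) hx]
    calc β / EW n w * x * ((1 - Real.tanh (arg n w β h x i) ^ 2) * w i ^ 2)
        = (s * w i) * ((s * w i * x + h - h) * (1 - Real.tanh (arg n w β h x i) ^ 2)) := by
          rw [← hs2]; ring
      _ = (s * w i) * ((s * w i * x + h - h) * (1 - Real.tanh (s * w i * x + h) ^ 2)) := by
          rw [harg]
      _ ≤ (s * w i) * (Real.tanh (s * w i * x + h) - Real.tanh h) :=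
          mul_le_mul_of_nonneg_left (tanh_slope_pos hh hvge) (mul_pos hspos hwi).le
      _ = s * w i * Real.tanh (arg n w β h x i) - s * w i * Real.tanh h := by
          rw [harg]; ring
  have hsum : (β / EW n w * x) * T ≤ A - Real.tanh h * (s * ∑ i, w i) := by
    calc (β / EW n w * x) * T
        = ∑ i, β / EW n w * x * ((1 - Real.tanh (arg n w β h x i) ^ 2) * w i ^ 2) := by
          rw [hT, Finset.mul_sum]
      _ ≤ ∑ i, (s * w i * Real.tanh (arg n w β h x i) - s * w i * Real.tanh h) :=
          Finset.sum_le_sum fun i _ => key i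
      _ = A - Real.tanh h * (s * ∑ i, w i) := by
          rw [Finset.sum_sub_distrib, hA]
          congr 1
          rw [Finset.mul_sum, Finset.mul_sum]
          exact Finset.sum_congr rfl fun i _ => by ring
  clear_value s A T
  have hthpos : 0 < Real.tanh h := tanh_pos' hh
  have hTB : 0 < Real.tanh h * (s * ∑ i, w i) := mul_pos hthpos (mul_pos hspos hB)
  have h4 : (β / EW n w * x) * T < (n:ℝ) * x := by
    rw [← hfixA]; linarith
  have h3 : (β / EW n w) * T < (n:ℝ) := by
    have h5 : (β / EW n w * T) * x < (n:ℝ) * x := by linarith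
    exact lt_of_mul_lt_mul_right h5 hx.le
  have h7 : (β / EW n w * T) * (1/(n:ℝ)) < (n:ℝ) * (1/(n:ℝ)) :=
    mul_lt_mul_of_pos_right h3 (by positivity)
  rw [mul_one_div_cancel hn'.ne'] at h7
  unfold Gfun''
  rw [← hT]
  linarith

private lemma second_deriv_pos_of_fix_neg (n : ℕ) (hn : 1 ≤ n) (w : Fin n → ℝ)
    (hw : ∀ i, 0 < w i) {β h x : ℝ} (hβ : 0 < β) (hfix : Gfun' n w β h x = 0)
    (hh : h < 0) (hx : x < 0) : 0 < Gfun'' n w β h x := by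
  have h1 : Gfun' n w β (-h) (-x) = 0 := by rw [Gfun'_neg, hfix, neg_zero]
  have h2 := second_deriv_pos_of_fix n hn w hw hβ h1 (by linarith) (by linarith)
  rwa [Gfun''_neg] at h2

/-- Under weight regularity (i)–(ii) and for `(β,h)` in the uniqueness regime, for all `n`
large enough the global minimizer `x_n*` of `G_n` (which solves `G_n'(x) = 0`, has the same
sign as `h`, and equals `0` if `h = 0`) satisfies `G_n''(x_n*) > 0`. -/
theorem globalMin_second_deriv_pos (w : (n : ℕ) → Fin n → ℝ) (ν : Measure ℝ)
    (hregI : WeightRegI w ν) (hregII : WeightRegII w ν)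
    (β h : ℝ) (hU : Uniq ν β h) :
    ∃ N : ℕ, ∀ n, N ≤ n → ∀ x : ℝ,
      (∀ y : ℝ, Gfun n (w n) β h x ≤ Gfun n (w n) β h y) →
      Gfun' n (w n) β h x = 0 → SameSign h x →
      0 < Gfun'' n (w n) β h x := by
  have hwpos := hregI.1
  have hEWpos : ∀ n : ℕ, 1 ≤ n → 0 < EW n (w n) := by
    intro n hn
    have hn' : (0:ℝ) < n := by exact_mod_cast hn
    have hB : 0 < ∑ i, w n i :=
      Finset.sum_pos (fun i _ => hwpos n i) ⟨⟨0, by omega⟩, Finset.mem_univ _⟩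
    unfold EW; positivity
  rcases hU with ⟨hβ0, hh⟩ | ⟨hβpos, hβlt, rfl⟩
  · -- h ≠ 0 : any n ≥ 1 works
    refine ⟨1, fun n hn x _ hfix hsign => ?_⟩
    rcases eq_or_lt_of_le hβ0 with rfl | hβpos
    · simp [Gfun'']
    rcases hsign with ⟨hh1, hx1⟩ | ⟨hh1, hx1⟩ | ⟨hh1, _⟩
    · exact second_deriv_pos_of_fix n hn (w n) (hwpos n) hβpos hfix hh1 hx1
    · exact second_deriv_pos_of_fix_neg n hn (w n) (hwpos n) hβpos hfix hh1 hx1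
    · exact absurd hh1 hh
  · -- h = 0, 0 < β < β_c
    obtain ⟨hwpos0, hνprob, hconv, hint, hI1pos⟩ := hregI
    obtain ⟨hI2int, hEWk2⟩ := hregII
    set I1 := ∫ x, x ∂ν with hI1
    set I2 := ∫ x, x ^ 2 ∂ν with hI2
    have hI2nn : 0 ≤ I2 := integral_nonneg fun x => sq_nonneg x
    have hβc : β < I1 / I2 := hβlt
    have hI2pos : 0 < I2 := by
      rcases eq_or_lt_of_le hI2nn with h0 | h0
      · rw [← h0, div_zero] at hβc; linarith
      · exact h0
    have hβI2 : β * I2 < I1 := (lt_div_iff₀ hI2pos).mp hβc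
    set t := (β * I2 + I1) / 2 with ht
    have htl : β * I2 < t := by rw [ht]; linarith
    have htu : t < I1 := by rw [ht]; linarith
    -- truncation
    set F : ℕ → ℝ → ℝ := fun M x => min (max x 0) (M:ℝ) with hF
    have hcont : ∀ M, Continuous (F M) := fun M =>
      (continuous_id.max continuous_const).min continuous_const
    have hF0 : ∀ M x, 0 ≤ F M x := fun M x =>
      le_min (le_max_right x 0) (Nat.cast_nonneg M)
    have hFub : ∀ M (x : ℝ), F M x ≤ (M:ℝ) := fun M x => min_le_right _ _
    have hFle : ∀ M (x : ℝ), |F M x| ≤ |x| := by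
      intro M x
      rw [abs_of_nonneg (hF0 M x)]
      exact le_trans (min_le_left _ _) (max_le (le_abs_self x) (abs_nonneg x))
    have hFtendsto : ∀ x : ℝ, Tendsto (fun M : ℕ => F M x) atTop (𝓝 (max x 0)) := by
      intro x
      refine tendsto_const_nhds.congr' ?_
      filter_upwards [eventually_ge_atTop ⌈x⌉₊] with M hM
      have hxM : x ≤ (M:ℝ) := le_trans (Nat.le_ceil x) (by exact_mod_cast hM)
      exact (min_eq_left (max_le hxM (Nat.cast_nonneg M))).symm
    have hPint : Tendsto (fun M : ℕ => ∫ x, F M x ∂ν) atTop (𝓝 (∫ x, max x 0 ∂ν)) :=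
      MeasureTheory.tendsto_integral_of_dominated_convergence (fun x => |x|)
        (fun M => (hcont M).aestronglyMeasurable)
        hint.abs
        (fun M => Filter.Eventually.of_forall fun x => by
          simpa [Real.norm_eq_abs] using hFle M x)
        (Filter.Eventually.of_forall hFtendsto)
    have hmaxint : MeasureTheory.Integrable (fun x => max x 0) ν :=
      hint.abs.mono ((continuous_id.max continuous_const).aestronglyMeasurable)
        (Filter.Eventually.of_forall fun x => by
          simp only [Real.norm_eq_abs]
          rw [abs_of_nonneg (le_max_right x 0), abs_abs]
          exact max_le (le_abs_self x) (abs_nonneg x))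
    have hPge : I1 ≤ ∫ x, max x 0 ∂ν :=
      MeasureTheory.integral_mono hint hmaxint fun x => le_max_left x 0
    obtain ⟨M, hM⟩ := (hPint.eventually (eventually_gt_nhds (lt_of_lt_of_le htu hPge))).exists
    -- bounded continuous function
    set f : BoundedContinuousFunction ℝ ℝ :=
      BoundedContinuousFunction.mkOfBound ⟨F M, hcont M⟩ M (by
        intro x y
        rw [Real.dist_eq]
        have h1 := hF0 M x; have h2 := hFub M x
        have h3 := hF0 M y; have h4 := hFub M y
        rw [abs_sub_le_iff]
        constructor <;> dsimp only [ContinuousMap.coe_mk] <;> linarith) with hf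
    have hfcoe : ∀ x : ℝ, f x = F M x := fun x => rfl
    have hconv' : Tendsto (fun n : ℕ => (1 / n : ℝ) * ∑ i, F M (w n i)) atTop
        (𝓝 (∫ x, F M x ∂ν)) := hconv f
    have hev1 : ∀ᶠ n : ℕ in atTop, t < (1 / n : ℝ) * ∑ i, F M (w n i) :=
      hconv'.eventually (eventually_gt_nhds hM)
    have hev2 : ∀ᶠ n : ℕ in atTop, β * EWk n (w n) 2 < t :=
      (hEWk2.const_mul β).eventually (eventually_lt_nhds htl)
    obtain ⟨N, hN⟩ := Filter.eventually_atTop.mp ((hev1.and hev2).and (eventually_ge_atTop 1))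
    refine ⟨N, fun n hn x _ hfix hsign => ?_⟩
    obtain ⟨⟨h1, h2⟩, h3⟩ := hN n hn
    have hx0 : x = 0 := by
      rcases hsign with ⟨hh1, _⟩ | ⟨hh1, _⟩ | ⟨_, hx0⟩
      · exact absurd hh1 (lt_irrefl 0)
      · exact absurd hh1 (lt_irrefl 0)
      · exact hx0
    subst hx0
    have hEW : 0 < EW n (w n) := hEWpos n h3
    have hEWge : (1 / n : ℝ) * ∑ i, F M (w n i) ≤ EW n (w n) := by
      unfold EW
      refine mul_le_mul_of_nonneg_left (Finset.sum_le_sum fun i _ => ?_) (by positivity)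
      exact le_trans (min_le_left _ _) (le_of_eq (max_eq_left (hwpos n i).le))
    have hargz : ∀ i : Fin n, arg n (w n) β 0 0 i = 0 := fun i => by simp [arg]
    have hkey : β * ((1 / n : ℝ) * ∑ i, (w n i) ^ 2) < EW n (w n) := by
      have h2' : β * ((1 / n : ℝ) * ∑ i, (w n i) ^ 2) < t := h2
      linarith
    unfold Gfun''
    simp only [hargz, Real.tanh_zero, ne_eq, OfNat.ofNat_ne_zero, not_false_eq_true,
      zero_pow, sub_zero, one_mul]
    have h6 : β / EW n (w n) * ((1 / n : ℝ) * ∑ i, (w n i) ^ 2) < 1 := by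
      rw [div_mul_eq_mul_div, div_lt_one hEW]
      exact hkey
    linarith


end ICW
end
end

section
/- In the ICW model, the error terms R_1 := (√n/√χ_n)·(1/n)∑_i [tanh((β w_i/E[W_n])·m̃_n + h) − tanh((β w_i/E[W_n])·m̃_n^i + h)] and R̃_1 := (√n/√χ̃_n)·(1/n)∑_i w_i·[tanh((β w_i/E[W_n])·m̃_n + h) − tanh((β w_i/E[W_n])·m̃_n^i + h)] satisfy E_{μ_n}[|R_1|] ≤ (β/√χ_n)·(E[W_n²]/E[W_n])·n^{−1/2} and E_{μ_n}[|R̃_1|] ≤ (β/√χ̃_n)·(E[W_n³]/E[W_n])·n^{−1/2}. -/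
/-! Since `m̃_n − m̃_n^i = w_i σ_i / n`, the two `tanh` arguments in the `i`-th summand differ
by `β w_i² σ_i / (n E[W_n])`, and `tanh` is 1-Lipschitz. Each summand is therefore bounded by
`β w_i² / (n E[W_n])` for every configuration, hence so is its `μ_n`-expectation. -/

open Real BigOperators Finset MeasureTheory Filter ProbabilityTheory Topology

noncomputable section

namespace Real

theorem hasDerivAt_tanh (x : ℝ) : HasDerivAt tanh (cosh x ^ 2)⁻¹ x := by
  have hquot := (hasDerivAt_sinh x).div (hasDerivAt_cosh x) (cosh_pos x).ne'
  rw [show (sinh / cosh : ℝ → ℝ) = tanh from funext fun y => (tanh_eq_sinh_div_cosh y).symm,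
    ← sq, ← sq, cosh_sq_sub_sinh_sq, one_div] at hquot
  exact hquot

theorem lipschitzWith_tanh : LipschitzWith 1 tanh := by
  refine lipschitzWith_of_nnnorm_deriv_le (fun x => (hasDerivAt_tanh x).differentiableAt)
    fun x => ?_
  rw [(hasDerivAt_tanh x).deriv, ← NNReal.coe_le_coe, coe_nnnorm, norm_inv, norm_pow,
    norm_eq_abs, abs_of_pos (cosh_pos x), NNReal.coe_one]
  exact inv_le_one_of_one_le₀ (one_le_pow₀ (one_le_cosh x))

theorem abs_tanh_sub_tanh_le (x y : ℝ) : |tanh x - tanh y| ≤ |x - y| := by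
  simpa [dist_eq] using lipschitzWith_tanh.dist_le_mul x y

end Real

namespace ICW

theorem Z_pos (n : ℕ) (w : Fin n → ℝ) (β h : ℝ) : 0 < Z n w β h :=
  sum_pos (fun _ _ => exp_pos _) univ_nonempty

theorem icwE_le_of_forall_le {n : ℕ} {w : Fin n → ℝ} {β h c : ℝ}
    {f : (Fin n → Bool) → ℝ} (hf : ∀ σ, f σ ≤ c) : icwE n w β h f ≤ c := by
  rw [icwE, div_le_iff₀ (Z_pos n w β h), Z, mul_sum]
  exact sum_le_sum fun σ _ =>
    (mul_le_mul_of_nonneg_left (hf σ) (exp_pos _).le).trans_eq (mul_comm _ _)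

theorem abs_spin (b : Bool) : |spin b| = 1 := by cases b <;> simp [spin]

theorem EW_nonneg {n : ℕ} {w : Fin n → ℝ} (hw : ∀ i, 0 ≤ w i) : 0 ≤ EW n w :=
  mul_nonneg (by positivity) (sum_nonneg fun i _ => hw i)

theorem mtil_sub_mtilI (n : ℕ) (w : Fin n → ℝ) (σ : Fin n → Bool) (i : Fin n) :
    mtil n w σ - mtilI n w σ i = 1 / n * (w i * spin (σ i)) := by
  rw [mtil, mtilI, ← add_sum_erase univ (fun j => w j * spin (σ j)) (mem_univ i)]
  ring

section LeaveOneOut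

variable {n : ℕ} {w : Fin n → ℝ} {β : ℝ} (h : ℝ)

theorem abs_tanh_mtil_sub_tanh_mtilI_le (hβ : 0 ≤ β) (hw : ∀ i, 0 ≤ w i)
    (σ : Fin n → Bool) (i : Fin n) :
    |tanh (β * w i / EW n w * mtil n w σ + h) - tanh (β * w i / EW n w * mtilI n w σ i + h)|
      ≤ β * w i ^ 2 / (n * EW n w) :=
  calc _ ≤ |(β * w i / EW n w * mtil n w σ + h) - (β * w i / EW n w * mtilI n w σ i + h)| :=
        abs_tanh_sub_tanh_le _ _
    _ = |β * w i ^ 2 / (n * EW n w) * spin (σ i)| := by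
        rw [add_sub_add_right_eq_sub, ← mul_sub, mtil_sub_mtilI]
        congr 1
        ring
    _ = β * w i ^ 2 / (n * EW n w) := by
        rw [abs_mul, abs_spin, mul_one, abs_of_nonneg]
        exact div_nonneg (by positivity) (mul_nonneg n.cast_nonneg (EW_nonneg hw))

theorem abs_avg_pow_mul_tanh_mtil_sub_le (k : ℕ) (hβ : 0 ≤ β) (hw : ∀ i, 0 ≤ w i)
    (σ : Fin n → Bool) :
    |1 / n * ∑ i, w i ^ k * (tanh (β * w i / EW n w * mtil n w σ + h)
        - tanh (β * w i / EW n w * mtilI n w σ i + h))|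
      ≤ β * (EWk n w (k + 2) / EW n w) / n := by
  have hterm (i : Fin n) := abs_tanh_mtil_sub_tanh_mtilI_le h hβ hw σ i
  have hsum : ∑ i, w i ^ k * (β * w i ^ 2 / (n * EW n w))
      = β / (n * EW n w) * ∑ i, w i ^ (k + 2) := by
    rw [mul_sum]
    exact sum_congr rfl fun i _ => by ring
  calc _ = 1 / n * |∑ i, w i ^ k * (tanh (β * w i / EW n w * mtil n w σ + h)
          - tanh (β * w i / EW n w * mtilI n w σ i + h))| := by
        rw [abs_mul, abs_of_nonneg (by positivity)]
    _ ≤ 1 / n * ∑ i, w i ^ k * (β * w i ^ 2 / (n * EW n w)) := by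
        gcongr
        refine (abs_sum_le_sum_abs _ _).trans (sum_le_sum fun i _ => ?_)
        rw [abs_mul, abs_of_nonneg (pow_nonneg (hw i) k)]
        exact mul_le_mul_of_nonneg_left (hterm i) (pow_nonneg (hw i) k)
    _ = β * (EWk n w (k + 2) / EW n w) / n := by
        rw [hsum, EWk]
        ring

end LeaveOneOut

theorem abs_sqrt_div_sqrt_mul_le {x c a b : ℝ} (ha : |a| ≤ b / x) :
    |√x / √c * a| ≤ b / √c / √x :=
  calc _ = √x / √c * |a| := by rw [abs_mul, abs_of_nonneg (by positivity)]
    _ ≤ √x / √c * (b / x) := by gcongr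
    _ = b / √c * (√x / x) := by ring
    _ = b / √c / √x := by rw [sqrt_div_self', mul_one_div]

theorem R1_bounds_general (n : ℕ) (w : Fin n → ℝ) (hw : ∀ i, 0 < w i)
    (β h : ℝ) (hβ : 0 < β) (x : ℝ) :
    icwE n w β h (fun σ => |R1 n w β h x σ|)
        ≤ β / Real.sqrt (chiN n w β h x) * (EWk n w 2 / EW n w) / Real.sqrt n ∧
    icwE n w β h (fun σ => |Rtil1 n w β h x σ|)
        ≤ β / Real.sqrt (chiTil n w β h x) * (EWk n w 3 / EW n w) / Real.sqrt n := by
  have hw' (i : Fin n) : 0 ≤ w i := (hw i).le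
  refine ⟨icwE_le_of_forall_le fun σ => ?_, icwE_le_of_forall_le fun σ => ?_⟩ <;>
    rw [div_mul_eq_mul_div] <;> refine abs_sqrt_div_sqrt_mul_le ?_
  · simpa only [pow_zero, one_mul] using abs_avg_pow_mul_tanh_mtil_sub_le h 0 hβ.le hw' σ
  · simpa only [pow_one] using abs_avg_pow_mul_tanh_mtil_sub_le h 1 hβ.le hw' σ

/-- **Bounds on the error terms `R_1` and `R̃_1`**:
`E[|R_1|] ≤ (β/√χ_n)·(E[W_n²]/E[W_n])·n^{−1/2}` and
`E[|R̃_1|] ≤ (β/√χ̃_n)·(E[W_n³]/E[W_n])·n^{−1/2}`. -/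
theorem R1_bounds (n : ℕ) (hn : 0 < n) (w : Fin n → ℝ) (hw : ∀ i, 0 < w i)
    (β h : ℝ) (hβ : 0 < β) (x : ℝ) (hx : Gfun' n w β h x = 0) (hsign : SameSign h x)
    (hG'' : 0 < Gfun'' n w β h x) :
    icwE n w β h (fun σ => |R1 n w β h x σ|)
        ≤ β / Real.sqrt (chiN n w β h x) * (EWk n w 2 / EW n w) / Real.sqrt n ∧
    icwE n w β h (fun σ => |Rtil1 n w β h x σ|)
        ≤ β / Real.sqrt (chiTil n w β h x) * (EWk n w 3 / EW n w) / Real.sqrt n :=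
  R1_bounds_general n w hw β h hβ x

end ICW
end
end
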